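/- For the Volterra integration operator A on L²(0,2π) and any b ∈ L²(0,2π) not lying in { ψ ∈ H¹(0,2π) : ψ(0) = 0 }, and for any choice of bases {ξₖ}, {ηₖ} of L²(0,2π) with Pₙ, Qₙ the orthogonal projections onto their first n spans converging strongly to the identity, the Petrov–Galerkin approximate solutions satisfy ‖Aₙ† Qₙ b‖_{L²} → ∞, where Aₙ = Qₙ A Pₙ. -/

import Mathlib

noncomputable section
open MeasureTheory Real Set ContinuousLinearMap Submodule Filter Topology

/-- `P` is the orthogonal projection of `E` onto the subspace `K`. -/
def IsOrthProjR {E : Type*} [NormedAddCommGroup E] [InnerProductSpace ℝ E] [CompleteSpace E]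
    (P : E →L[ℝ] E) (K : Submodule ℝ E) : Prop :=
  P ∘L P = P ∧ ContinuousLinearMap.adjoint P = P ∧ LinearMap.range (P : E →ₗ[ℝ] E) = K

/-- `B` is the Moore–Penrose generalized inverse of `T`. -/
def IsMPInvR {E F : Type*} [NormedAddCommGroup E] [InnerProductSpace ℝ E] [CompleteSpace E]
    [NormedAddCommGroup F] [InnerProductSpace ℝ F] [CompleteSpace F]
    (T : E →L[ℝ] F) (B : F →L[ℝ] E) : Prop :=
  T ∘L B ∘L T = T ∧ B ∘L T ∘L B = B ∧
  ContinuousLinearMap.adjoint (T ∘L B) = T ∘L B ∧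
  ContinuousLinearMap.adjoint (B ∘L T) = B ∘L T

set_option maxHeartbeats 2000000

section Hilbert
variable {E : Type*} [NormedAddCommGroup E] [InnerProductSpace ℝ E] [CompleteSpace E]

local notation "⟪" x ", " y "⟫" => @inner ℝ _ _ x y

lemma orthProjNormLe {P : E →L[ℝ] E} (h1 : P ∘L P = P)
    (h2 : ContinuousLinearMap.adjoint P = P) (x : E) : ‖P x‖ ≤ ‖x‖ := by
  rcases eq_or_ne (‖P x‖) 0 with h | h
  · rw [h]; exact norm_nonneg x
  have key : ⟪P x, P x⟫ = ⟪x, P x⟫ := by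
    calc ⟪P x, P x⟫ = ⟪ContinuousLinearMap.adjoint P x, P x⟫ := by rw [h2]
      _ = ⟪x, P (P x)⟫ := ContinuousLinearMap.adjoint_inner_left P (P x) x
      _ = ⟪x, (P ∘L P) x⟫ := rfl
      _ = ⟪x, P x⟫ := by rw [h1]
  have h3 : ‖P x‖ * ‖P x‖ ≤ ‖x‖ * ‖P x‖ := by
    rw [← real_inner_self_eq_norm_mul_norm, key]
    exact real_inner_le_norm x (P x)
  exact le_of_mul_le_mul_right h3 (lt_of_le_of_ne (norm_nonneg _) (Ne.symm h))

lemma orthProjMin {P : E →L[ℝ] E} (h1 : P ∘L P = P)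
    (h2 : ContinuousLinearMap.adjoint P = P) (v u : E) : ‖v - P v‖ ≤ ‖v - P u‖ := by
  have hP0 : P (v - P v) = 0 := by
    rw [map_sub, ← ContinuousLinearMap.comp_apply, h1, sub_self]
  have horth : ⟪v - P v, P v - P u⟫ = 0 := by
    calc ⟪v - P v, P v - P u⟫ = ⟪v - P v, P (v - u)⟫ := by rw [map_sub]
      _ = ⟪ContinuousLinearMap.adjoint P (v - P v), v - u⟫ :=
        (ContinuousLinearMap.adjoint_inner_left P (v - u) (v - P v)).symm
      _ = ⟪P (v - P v), v - u⟫ := by rw [h2]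
      _ = 0 := by rw [hP0, inner_zero_left]
  have hsq : ‖v - P u‖ ^ 2 = ‖v - P v‖ ^ 2 + ‖P v - P u‖ ^ 2 := by
    have : v - P u = (v - P v) + (P v - P u) := by abel
    rw [this, norm_add_sq_real, horth]; ring
  have h4 : ‖v - P v‖ ^ 2 ≤ ‖v - P u‖ ^ 2 := by nlinarith [sq_nonneg ‖P v - P u‖]
  nlinarith [norm_nonneg (v - P v), norm_nonneg (v - P u)]
end Hilbert

section Hilbert
variable {E : Type*} [NormedAddCommGroup E] [InnerProductSpace ℝ E] [CompleteSpace E]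

local notation "⟪" x ", " y "⟫" => @inner ℝ _ _ x y

lemma memRangeOfInnerLe (A : E →L[ℝ] E) (b : E) (C : ℝ) (hC : 0 ≤ C)
    (h : ∀ ψ : E, |⟪b, ψ⟫| ≤ C * ‖ContinuousLinearMap.adjoint A ψ‖) :
    ∃ w : E, A w = b := by
  set T : E →L[ℝ] E := ContinuousLinearMap.adjoint A with hT
  set Tl : E →ₗ[ℝ] E := (T : E →ₗ[ℝ] E) with hTl
  -- the functional ψ ↦ ⟪b, ψ⟫
  set ℓ : E →ₗ[ℝ] ℝ := ((innerSL ℝ b : E →L[ℝ] ℝ) : E →ₗ[ℝ] ℝ) with hℓ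
  have hker : LinearMap.ker Tl ≤ LinearMap.ker ℓ := by
    intro ψ hψ
    have hψ' : Tl ψ = 0 := hψ
    have := h ψ
    rw [show T ψ = Tl ψ from rfl, hψ', norm_zero, mul_zero] at this
    have : ⟪b, ψ⟫ = 0 := abs_nonpos_iff.mp this
    simpa [hℓ] using this
  set q : (E ⧸ LinearMap.ker Tl) →ₗ[ℝ] ℝ := (LinearMap.ker Tl).liftQ ℓ hker with hq
  set e := Tl.quotKerEquivRange with he
  set f₀ : LinearMap.range Tl →ₗ[ℝ] ℝ := q ∘ₗ (e.symm : LinearMap.range Tl →ₗ[ℝ] (E ⧸ LinearMap.ker Tl)) with hf₀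
  have hf₀val : ∀ ψ : E, f₀ ⟨Tl ψ, LinearMap.mem_range_self Tl ψ⟩ = ⟪b, ψ⟫ := by
    intro ψ
    have h1 : e.symm ⟨Tl ψ, LinearMap.mem_range_self Tl ψ⟩ = Submodule.Quotient.mk ψ :=
      Tl.quotKerEquivRange_symm_apply_image ψ (LinearMap.mem_range_self Tl ψ)
    simp [hf₀, h1, hq, Submodule.liftQ_apply, hℓ]
  have hbound : ∀ v : LinearMap.range Tl, ‖f₀ v‖ ≤ C * ‖v‖ := by
    rintro ⟨v, hv⟩
    obtain ⟨ψ, rfl⟩ := hv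
    rw [hf₀val ψ]
    simpa [hTl] using h ψ
  set f : (LinearMap.range Tl : Submodule ℝ E) →L[ℝ] ℝ := f₀.mkContinuous C hbound with hf
  obtain ⟨g, hg, -⟩ := exists_extension_norm_eq (LinearMap.range Tl) f
  set w : E := (InnerProductSpace.toDual ℝ E).symm g with hw
  have hwval : ∀ ψ : E, ⟪w, T ψ⟫ = ⟪b, ψ⟫ := by
    intro ψ
    have h1 : ⟪w, T ψ⟫ = g (T ψ) := InnerProductSpace.toDual_symm_apply
    have h2 : g (T ψ) = f ⟨Tl ψ, LinearMap.mem_range_self Tl ψ⟩ :=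
      hg ⟨Tl ψ, LinearMap.mem_range_self Tl ψ⟩
    rw [h1, h2]
    exact hf₀val ψ
  refine ⟨w, ?_⟩
  have : ∀ ψ : E, ⟪A w, ψ⟫ = ⟪b, ψ⟫ := by
    intro ψ
    rw [← hwval ψ, hT]
    exact (ContinuousLinearMap.adjoint_inner_right A w ψ).symm
  exact ext_inner_right ℝ this
end Hilbert

@[reducible] def μ2 : Measure ℝ := volume.restrict (Set.Ioo (0:ℝ) (2 * π))

instance : IsFiniteMeasure μ2 := by
  constructor
  rw [Measure.restrict_apply MeasurableSet.univ, Set.univ_inter, Real.volume_Ioo]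
  exact ENNReal.ofReal_lt_top

lemma measIocInter {c x : ℝ} (hc : c ∈ Set.Ioo 0 (2*π)) (hx : x ∈ Set.Ioo 0 (2*π)) :
    (μ2 (Set.Ioc 0 c ∩ Set.Ioc 0 x)).toReal = min c x := by
  have hm : (0:ℝ) < min c x := lt_min hc.1 hx.1
  have hm2 : min c x < 2*π := lt_of_le_of_lt (min_le_left _ _) hc.2
  rw [Set.Ioc_inter_Ioc, max_self, Measure.restrict_apply measurableSet_Ioc]
  have hle : volume (Set.Ioc 0 (min c x) ∩ Set.Ioo 0 (2*π)) ≤ ENNReal.ofReal (min c x) := by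
    refine le_trans (measure_mono Set.inter_subset_left) ?_
    rw [Real.volume_Ioc]; simp
  have hge : ENNReal.ofReal (min c x) ≤ volume (Set.Ioc 0 (min c x) ∩ Set.Ioo 0 (2*π)) := by
    have hsub : Set.Ioo 0 (min c x) ⊆ Set.Ioc 0 (min c x) ∩ Set.Ioo 0 (2*π) := fun t ht =>
      ⟨⟨ht.1, le_of_lt ht.2⟩, ht.1, lt_trans ht.2 hm2⟩
    refine le_trans (le_of_eq ?_) (measure_mono hsub)
    rw [Real.volume_Ioo]; simp
  rw [le_antisymm hle hge, ENNReal.toReal_ofReal (le_of_lt hm)]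

lemma stepA (A : Lp ℝ 2 μ2 →L[ℝ] Lp ℝ 2 μ2)
    (hA : ∀ φ : Lp ℝ 2 μ2, ∀ᵐ x ∂μ2, (A φ : ℝ → ℝ) x = ∫ t in Set.Ioc 0 x, (φ : ℝ → ℝ) t ∂μ2)
    (ψ : Lp ℝ 2 μ2) (horth : ∀ φ, @inner ℝ _ _ (A φ) ψ = (0:ℝ))
    {c : ℝ} (hc : c ∈ Set.Ioo 0 (2*π)) :
    ∫ x, min x c * (ψ : ℝ → ℝ) x ∂μ2 = 0 := by
  set φc : Lp ℝ 2 μ2 := indicatorConstLp 2 measurableSet_Ioc (measure_ne_top μ2 (Set.Ioc 0 c)) (1:ℝ) with hφc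
  -- A φc agrees a.e. with min · c
  have hcoe : (A φc : ℝ → ℝ) =ᵐ[μ2] fun x => min x c := by
    filter_upwards [hA φc, ae_restrict_mem measurableSet_Ioo] with x h1 h2
    rw [h1]
    have hrestr : ∫ t in Set.Ioc 0 x, (φc : ℝ → ℝ) t ∂μ2
        = ∫ t in Set.Ioc 0 x, (Set.Ioc 0 c).indicator (fun _ => (1:ℝ)) t ∂μ2 := by
      refine integral_congr_ae (ae_restrict_of_ae ?_)
      exact indicatorConstLp_coeFn
    rw [hrestr, integral_indicator measurableSet_Ioc]
    rw [setIntegral_const, measureReal_def, Measure.restrict_apply measurableSet_Ioc]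
    rw [smul_eq_mul, mul_one]
    exact measIocInter hc h2 |>.trans (min_comm c x)
  have h1 : @inner ℝ _ _ (A φc) ψ = ∫ x, (A φc : ℝ → ℝ) x * (ψ : ℝ → ℝ) x ∂μ2 := by
    rw [MeasureTheory.L2.inner_def]
    refine integral_congr_ae (Filter.Eventually.of_forall fun x => ?_)
    simp [RCLike.inner_apply, mul_comm]
  have h2 : ∫ x, (A φc : ℝ → ℝ) x * (ψ : ℝ → ℝ) x ∂μ2 = ∫ x, min x c * (ψ : ℝ → ℝ) x ∂μ2 :=
    integral_congr_ae (hcoe.mul (Filter.EventuallyEq.refl _ _))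
  rw [← h2, ← h1, horth φc]
lemma minMulInt (ψ : Lp ℝ 2 μ2) (r : ℝ) :
    Integrable (fun x => min x r * (ψ : ℝ → ℝ) x) μ2 := by
  have hint : Integrable (ψ : ℝ → ℝ) μ2 := (Lp.memLp ψ).integrable one_le_two
  refine Integrable.mono' (hint.norm.const_mul (|r| + 2*π)) ?_ ?_
  · exact ((continuous_id.min continuous_const).aestronglyMeasurable).mul
      (Lp.aestronglyMeasurable ψ)
  · filter_upwards [ae_restrict_mem measurableSet_Ioo] with x hx
    rw [norm_mul]
    gcongr
    rcases min_choice x r with h | h <;> rw [Real.norm_eq_abs, h]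
    · rw [abs_of_pos hx.1]; linarith [hx.2, abs_nonneg r]
    · linarith [Real.pi_pos, le_abs_self r, abs_nonneg r, neg_abs_le r, Real.pi_gt_three]

lemma stepB (ψ : Lp ℝ 2 μ2)
    (hkey : ∀ {c : ℝ}, c ∈ Set.Ioo 0 (2*π) → ∫ x, min x c * (ψ : ℝ → ℝ) x ∂μ2 = 0)
    {c : ℝ} (hc : c ∈ Set.Ioo 0 (2*π)) :
    ∫ x in Set.Ioi c, (ψ : ℝ → ℝ) x ∂μ2 = 0 := by
  have hint : Integrable (ψ : ℝ → ℝ) μ2 := (Lp.memLp ψ).integrable one_le_two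
  set d : ℕ → ℝ := fun k => c + (2*π - c)/(k+2) with hd
  have hcd : ∀ k, c < d k := by
    intro k
    have : (0:ℝ) < (2*π - c)/(k+2) := div_pos (by linarith [hc.2]) (by positivity)
    simp only [hd]; linarith
  have hdmem : ∀ k, d k ∈ Set.Ioo 0 (2*π) := by
    intro k
    refine ⟨lt_trans hc.1 (hcd k), ?_⟩
    have h2 : (2*π - c)/((k:ℝ)+2) ≤ (2*π - c)/2 := by
      apply div_le_div_of_nonneg_left (by linarith [hc.2]) (by norm_num)
      · norm_num
    have : c + (2*π - c)/2 < 2*π := by linarith [hc.2]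
    calc d k = c + (2*π - c)/((k:ℝ)+2) := rfl
      _ ≤ c + (2*π - c)/2 := by linarith
      _ < 2*π := this
  have hdlim : Tendsto d atTop (nhds c) := by
    have h1 : Tendsto (fun k : ℕ => ((k:ℝ)+2)) atTop atTop :=
      tendsto_atTop_add_const_right atTop 2 tendsto_natCast_atTop_atTop
    have h2 : Tendsto (fun k : ℕ => (2*π - c)/(k+2)) atTop (nhds 0) := by
      simpa [div_eq_mul_inv] using h1.inv_tendsto_atTop.const_mul (2*π - c)
    simpa using (tendsto_const_nhds (x := c)).add h2
  have hramp : ∀ k, ∫ x, ((min x (d k) - min x c)/(d k - c)) * (ψ : ℝ → ℝ) x ∂μ2 = 0 := by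
    intro k
    have heq : (fun x => ((min x (d k) - min x c)/(d k - c)) * (ψ : ℝ → ℝ) x)
        = fun x => (d k - c)⁻¹ • (min x (d k) * (ψ : ℝ → ℝ) x - min x c * (ψ : ℝ → ℝ) x) := by
      funext x; simp only [smul_eq_mul]; ring
    rw [heq, integral_smul, integral_sub (minMulInt ψ (d k)) (minMulInt ψ c),
      hkey (hdmem k), hkey hc, sub_zero, smul_zero]
  have hmain : Tendsto (fun k => ∫ x, ((min x (d k) - min x c)/(d k - c)) * (ψ : ℝ → ℝ) x ∂μ2)
      atTop (nhds (∫ x, (Set.Ioi c).indicator (ψ : ℝ → ℝ) x ∂μ2)) := by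
    refine tendsto_integral_of_dominated_convergence (fun x => ‖(ψ : ℝ → ℝ) x‖)
      (fun k => ((((continuous_id.min continuous_const).sub
        (continuous_id.min continuous_const)).div_const _).aestronglyMeasurable).mul
        (Lp.aestronglyMeasurable ψ)) hint.norm ?_ ?_
    · intro k
      refine Filter.Eventually.of_forall fun x => ?_
      rw [norm_mul]
      have h0 : 0 ≤ min x (d k) - min x c := by
        have := min_le_min (le_refl x) (hcd k).le
        linarith
      have h1 : min x (d k) - min x c ≤ d k - c := by
        rcases le_total x c with h | h
        · rw [min_eq_left h, min_eq_left (h.trans (hcd k).le)]; linarith [hcd k]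
        · rcases le_total x (d k) with h' | h'
          · rw [min_eq_left h', min_eq_right h]; linarith
          · rw [min_eq_right h', min_eq_right h]
      have hpos : 0 < d k - c := sub_pos.2 (hcd k)
      have hnorm : ‖(min x (d k) - min x c)/(d k - c)‖ ≤ 1 := by
        rw [Real.norm_eq_abs, abs_of_nonneg (div_nonneg h0 hpos.le)]
        exact (div_le_one hpos).2 h1
      calc ‖(min x (d k) - min x c)/(d k - c)‖ * ‖(ψ : ℝ → ℝ) x‖
          ≤ 1 * ‖(ψ : ℝ → ℝ) x‖ := by gcongr
        _ = ‖(ψ : ℝ → ℝ) x‖ := one_mul _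
    · have hc0 : μ2 {c} = 0 := by
        refine le_antisymm ?_ zero_le
        rw [Measure.restrict_apply (measurableSet_singleton c)]
        exact le_of_eq (measure_mono_null Set.inter_subset_left Real.volume_singleton)
      have hae : ∀ᵐ x ∂μ2, x ≠ c := by
        rw [ae_iff]
        convert hc0 using 2
        ext x; simp
      filter_upwards [hae] with x hx
      rcases lt_or_gt_of_ne hx with h | h
      · -- x < c : ramp is 0, indicator is 0
        have : ∀ k, ((min x (d k) - min x c)/(d k - c)) * (ψ : ℝ → ℝ) x = 0 := by
          intro k
          rw [min_eq_left (le_of_lt h), min_eq_left (le_of_lt (h.trans (hcd k)))]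
          simp
        rw [Set.indicator_of_notMem (by simpa using h.le)]
        simpa [this] using tendsto_const_nhds (x := (0:ℝ)) (f := atTop (α := ℕ))
      · -- x > c : ramp is eventually ψ x
        have hev : ∀ᶠ k in atTop, d k < x := hdlim.eventually_lt_const h
        rw [Set.indicator_of_mem (by simpa using h)]
        refine Filter.Tendsto.congr' ?_ (tendsto_const_nhds (x := (ψ : ℝ → ℝ) x))
        filter_upwards [hev] with k hk
        rw [min_eq_right hk.le, min_eq_right (le_of_lt (lt_trans (hcd k) hk))]
        rw [div_self (ne_of_gt (sub_pos.2 (hcd k))), one_mul]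
  have hzero : Tendsto (fun k => ∫ x, ((min x (d k) - min x c)/(d k - c)) * (ψ : ℝ → ℝ) x ∂μ2)
      atTop (nhds 0) := by
    simpa [hramp] using tendsto_const_nhds (x := (0:ℝ)) (f := atTop (α := ℕ))
  have := tendsto_nhds_unique hmain hzero
  rwa [integral_indicator measurableSet_Ioi] at this
lemma stepD (ψ : Lp ℝ 2 μ2)
    (hIoi : ∀ {c : ℝ}, c ∈ Set.Ioo 0 (2*π) → ∫ x in Set.Ioi c, (ψ : ℝ → ℝ) x ∂μ2 = 0) :
    ψ = 0 := by
  have hint : Integrable (ψ : ℝ → ℝ) μ2 := (Lp.memLp ψ).integrable one_le_two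
  -- Step C : integrals over subintervals vanish
  have hIoc : ∀ a b : ℝ, 0 < a → a ≤ b → b < 2*π →
      ∫ x in Set.Ioc a b, (ψ : ℝ → ℝ) x ∂μ2 = 0 := by
    intro a b ha hab hb
    have hmem_a : a ∈ Set.Ioo 0 (2*π) := ⟨ha, lt_of_le_of_lt hab hb⟩
    have hmem_b : b ∈ Set.Ioo 0 (2*π) := ⟨lt_of_lt_of_le ha hab, hb⟩
    have hunion : Set.Ioc a b ∪ Set.Ioi b = Set.Ioi a := Set.Ioc_union_Ioi_eq_Ioi hab
    have := setIntegral_union (Set.Ioc_disjoint_Ioi le_rfl) measurableSet_Ioi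
      (hint.integrableOn (s := Set.Ioc a b)) (hint.integrableOn (s := Set.Ioi b))
      (f := (ψ : ℝ → ℝ)) (μ := μ2)
    rw [hunion, hIoi hmem_a, hIoi hmem_b, add_zero] at this
    exact this.symm
  -- the function extended by zero
  set f : ℝ → ℝ := (Set.Ioo (0:ℝ) (2*π)).indicator (ψ : ℝ → ℝ) with hf
  have hfInt : Integrable f volume := by
    rw [hf, integrable_indicator_iff measurableSet_Ioo]
    exact hint
  have hloc : LocallyIntegrable f volume := hfInt.locallyIntegrable
  have havg := IsUnifLocDoublingMeasure.ae_tendsto_average (μ := (volume : Measure ℝ)) hloc 1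
  have hae : ∀ᵐ x ∂(volume : Measure ℝ), x ∈ Set.Ioo (0:ℝ) (2*π) → (ψ : ℝ → ℝ) x = 0 := by
    filter_upwards [havg] with x hx hmem
    set r₀ : ℝ := min x (2*π - x) / 2 with hr₀
    have hr₀pos : 0 < r₀ := by
      apply div_pos (lt_min hmem.1 (by linarith [hmem.2])) (by norm_num)
    set δ : ℕ → ℝ := fun k => r₀ / (k+1) with hδ
    have hδpos : ∀ k, 0 < δ k := fun k => div_pos hr₀pos (by positivity)
    have hδle : ∀ k, δ k ≤ r₀ := by
      intro k
      apply div_le_self hr₀pos.le (by push_cast; linarith [Nat.cast_nonneg (α := ℝ) k])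
    have hδlim : Tendsto δ atTop (nhds 0) := by
      have h1 : Tendsto (fun k : ℕ => ((k:ℝ)+1)) atTop atTop :=
        tendsto_atTop_add_const_right atTop 1 tendsto_natCast_atTop_atTop
      simpa [hδ, div_eq_mul_inv] using h1.inv_tendsto_atTop.const_mul r₀
    have hδlim' : Tendsto δ atTop (nhdsWithin 0 (Set.Ioi 0)) :=
      tendsto_nhdsWithin_of_tendsto_nhds_of_eventually_within _ hδlim
        (Filter.Eventually.of_forall fun k => hδpos k)
    have hball : ∀ᶠ k in atTop, x ∈ Metric.closedBall x (1 * δ k) :=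
      Filter.Eventually.of_forall fun k => by
        rw [one_mul]; exact Metric.mem_closedBall_self (hδpos k).le
    have hlim := hx (fun _ => x) δ hδlim' hball
    -- each average is zero
    have havg0 : ∀ k, ⨍ y in Metric.closedBall x (δ k), f y ∂volume = 0 := by
      intro k
      have hsmall : δ k < min x (2*π - x) := by
        refine lt_of_le_of_lt (hδle k) ?_
        rw [hr₀]
        have hpos : 0 < min x (2*π - x) := lt_min hmem.1 (by linarith [hmem.2])
        linarith
      have h1 : 0 < x - δ k := by
        have := lt_of_lt_of_le hsmall (min_le_left _ _); linarith
      have h2 : x + δ k < 2*π := by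
        have := lt_of_lt_of_le hsmall (min_le_right _ _); linarith
      have hsub : Metric.closedBall x (δ k) ⊆ Set.Ioo (0:ℝ) (2*π) := by
        rw [Real.closedBall_eq_Icc]
        intro t ht
        exact ⟨lt_of_lt_of_le h1 ht.1, lt_of_le_of_lt ht.2 h2⟩
      have hzero : ∫ y in Metric.closedBall x (δ k), f y ∂volume = 0 := by
        rw [hf, setIntegral_indicator measurableSet_Ioo,
          Set.inter_eq_self_of_subset_left hsub, Real.closedBall_eq_Icc,
          integral_Icc_eq_integral_Ioc]
        have h3 : Set.Ioc (x - δ k) (x + δ k) ⊆ Set.Ioo (0:ℝ) (2*π) := fun t ht =>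
          ⟨lt_trans h1 ht.1, lt_of_le_of_lt ht.2 h2⟩
        have hrw : ∫ t in Set.Ioc (x - δ k) (x + δ k), (ψ : ℝ → ℝ) t ∂volume
            = ∫ t in Set.Ioc (x - δ k) (x + δ k), (ψ : ℝ → ℝ) t ∂μ2 := by
          rw [Measure.restrict_restrict measurableSet_Ioc,
            Set.inter_eq_self_of_subset_left h3]
        rw [hrw]
        exact hIoc _ _ h1 (by linarith [hδpos k]) h2
      rw [setAverage_eq, hzero, smul_zero]
    have : Tendsto (fun k => ⨍ y in Metric.closedBall x (δ k), f y ∂volume) atTop (nhds 0) := by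
      simpa [havg0] using tendsto_const_nhds (x := (0:ℝ)) (f := atTop (α := ℕ))
    have hfx : f x = 0 := tendsto_nhds_unique hlim this
    rwa [hf, Set.indicator_of_mem hmem] at hfx
  -- conclude ψ = 0 in Lp
  rw [Lp.eq_zero_iff_ae_eq_zero]
  have : ∀ᵐ x ∂μ2, x ∈ Set.Ioo (0:ℝ) (2*π) → (ψ : ℝ → ℝ) x = 0 := ae_restrict_of_ae hae
  filter_upwards [this, ae_restrict_mem measurableSet_Ioo] with x h1 h2
  simpa using h1 h2
lemma rangeDense (A : Lp ℝ 2 μ2 →L[ℝ] Lp ℝ 2 μ2)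
    (hA : ∀ φ : Lp ℝ 2 μ2, ∀ᵐ x ∂μ2, (A φ : ℝ → ℝ) x = ∫ t in Set.Ioc 0 x, (φ : ℝ → ℝ) t ∂μ2) :
    (LinearMap.range (A : Lp ℝ 2 μ2 →ₗ[ℝ] Lp ℝ 2 μ2)).topologicalClosure = ⊤ := by
  rw [Submodule.topologicalClosure_eq_top_iff, Submodule.eq_bot_iff]
  intro ψ hψ
  have horth : ∀ φ, @inner ℝ _ _ (A φ) ψ = (0:ℝ) := fun φ =>
    (Submodule.mem_orthogonal _ ψ).1 hψ (A φ) ⟨φ, rfl⟩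
  exact stepD ψ (fun {c} hc => stepB ψ (fun {c'} hc' => stepA A hA ψ horth hc') hc)

/-- for the Volterra integration operator `A` on `L²(0,2π)` and any
`b ∉ { ψ ∈ H¹(0,2π) : ψ(0) = 0 }`, the Petrov–Galerkin approximate solutions built from
arbitrary bases satisfy `‖Aₙ† Qₙ b‖ → ∞`. -/
theorem stmt12
    (μ : Measure ℝ) (hμ : μ = volume.restrict (Set.Ioo (0:ℝ) (2 * π)))
    (A : Lp ℝ 2 μ →L[ℝ] Lp ℝ 2 μ)
    (hA : ∀ φ : Lp ℝ 2 μ, ∀ᵐ x ∂μ, (A φ : ℝ → ℝ) x = ∫ t in Set.Ioc 0 x, (φ : ℝ → ℝ) t ∂μ)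
    (ξ η : ℕ → Lp ℝ 2 μ)
    (P Q : ℕ → Lp ℝ 2 μ →L[ℝ] Lp ℝ 2 μ)
    (hP : ∀ n, IsOrthProjR (P n) (span ℝ (ξ '' Set.Iio n)))
    (hQ : ∀ n, IsOrthProjR (Q n) (span ℝ (η '' Set.Iio n)))
    (hPconv : ∀ x, Filter.Tendsto (fun n => P n x) atTop (nhds x))
    (hQconv : ∀ y, Filter.Tendsto (fun n => Q n y) atTop (nhds y))
    (An : ℕ → Lp ℝ 2 μ →L[ℝ] Lp ℝ 2 μ) (hAn : ∀ n, An n = Q n ∘L A ∘L P n)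
    (B : ℕ → Lp ℝ 2 μ →L[ℝ] Lp ℝ 2 μ) (hB : ∀ n, IsMPInvR (An n) (B n))
    (b : Lp ℝ 2 μ)
    (hb : ¬ ∃ f : ℝ → ℝ, (b : ℝ → ℝ) =ᵐ[μ] f ∧ f 0 = 0 ∧
      ∃ g : Lp ℝ 2 μ, ∀ x ∈ Set.Icc (0:ℝ) (2 * π),
        f x = ∫ t in Set.Ioc 0 x, (g : ℝ → ℝ) t ∂μ) :
    Filter.Tendsto (fun n => ‖B n (Q n b)‖) atTop atTop := by
  subst hμ
  by_contra hcon
  rw [Filter.tendsto_atTop] at hcon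
  push_neg at hcon
  obtain ⟨C, hC⟩ := hcon
  simp only [← not_le] at hC
  set C' : ℝ := max C 0 with hC'def
  have hC'0 : (0:ℝ) ≤ C' := le_max_right _ _
  have hC' : ∃ᶠ n in atTop, ‖B n (Q n b)‖ ≤ C' := by
    refine hC.mono fun n h => ?_
    push_neg at h
    exact h.le.trans (le_max_left C 0)
  have hdense := rangeDense A hA
  -- Step E : the Galerkin residual tends to zero
  have key2 : ∀ ε : ℝ, 0 < ε → ∀ᶠ n in atTop, ‖b - An n (B n (Q n b))‖ < ε := by
    intro ε hε
    have hbcl : b ∈ closure ((LinearMap.range (A : Lp ℝ 2 μ2 →ₗ[ℝ] Lp ℝ 2 μ2)) : Set (Lp ℝ 2 μ2)) := by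
      have h1 : b ∈ (LinearMap.range (A : Lp ℝ 2 μ2 →ₗ[ℝ] Lp ℝ 2 μ2)).topologicalClosure := by
        rw [hdense]; trivial
      exact h1
    obtain ⟨z', hz'mem, hz'dist⟩ := Metric.mem_closure_iff.1 hbcl (ε/3) (by linarith)
    obtain ⟨z, rfl⟩ := hz'mem
    have E1 : ∀ᶠ n in atTop, ‖b - Q n b‖ < ε/3 := by
      have h : Tendsto (fun n => ‖b - Q n b‖) atTop (nhds 0) := by
        have h0 := tendsto_iff_norm_sub_tendsto_zero.1 (hQconv b)
        exact h0.congr fun n => (norm_sub_rev _ _)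
      exact h.eventually_lt_const (by linarith)
    have E2 : ∀ᶠ n in atTop, ‖A‖ * ‖z - P n z‖ < ε/3 := by
      have h0 := tendsto_iff_norm_sub_tendsto_zero.1 (hPconv z)
      have h1 : Tendsto (fun n => ‖A‖ * ‖z - P n z‖) atTop (nhds (‖A‖ * 0)) :=
        (h0.congr fun n => (norm_sub_rev _ _)).const_mul ‖A‖
      rw [mul_zero] at h1
      exact h1.eventually_lt_const (by linarith)
    filter_upwards [E1, E2] with n h1 h2
    set xn := B n (Q n b) with hxn
    -- An n ∘L B n is an orthogonal projection
    have hproj1 : (An n ∘L B n) ∘L (An n ∘L B n) = An n ∘L B n := by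
      refine ContinuousLinearMap.ext fun x => ?_
      have := DFunLike.congr_fun (hB n).1 (B n x)
      simpa [ContinuousLinearMap.comp_apply] using this
    have hproj2 : ContinuousLinearMap.adjoint (An n ∘L B n) = An n ∘L B n := (hB n).2.2.1
    have hfix : (An n ∘L B n) (An n z) = An n z := by
      have := DFunLike.congr_fun (hB n).1 z
      simpa [ContinuousLinearMap.comp_apply] using this
    have hmin : ‖Q n b - (An n ∘L B n) (Q n b)‖ ≤ ‖Q n b - (An n ∘L B n) (An n z)‖ :=
      orthProjMin hproj1 hproj2 (Q n b) (An n z)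
    have hstep : ‖Q n b - An n xn‖ ≤ ‖b - A (P n z)‖ := by
      have e1 : An n xn = (An n ∘L B n) (Q n b) := by simp [hxn, ContinuousLinearMap.comp_apply]
      have e2 : An n z = Q n (A (P n z)) := by rw [hAn n]; simp [ContinuousLinearMap.comp_apply]
      calc ‖Q n b - An n xn‖ = ‖Q n b - (An n ∘L B n) (Q n b)‖ := by rw [e1]
        _ ≤ ‖Q n b - (An n ∘L B n) (An n z)‖ := hmin
        _ = ‖Q n b - Q n (A (P n z))‖ := by rw [hfix, e2]
        _ = ‖Q n (b - A (P n z))‖ := by rw [map_sub]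
        _ ≤ ‖b - A (P n z)‖ := orthProjNormLe (hQ n).1 (hQ n).2.1 _
    have hstep2 : ‖b - A (P n z)‖ ≤ ‖b - A z‖ + ‖A‖ * ‖z - P n z‖ := by
      calc ‖b - A (P n z)‖ ≤ ‖b - A z‖ + ‖A z - A (P n z)‖ := by
            have : b - A (P n z) = (b - A z) + (A z - A (P n z)) := by abel
            rw [this]; exact norm_add_le _ _
        _ ≤ ‖b - A z‖ + ‖A‖ * ‖z - P n z‖ := by
            gcongr
            rw [← map_sub]
            exact A.le_opNorm _
    have hdistz : ‖b - A z‖ < ε/3 := by rw [← dist_eq_norm]; exact hz'dist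
    calc ‖b - An n xn‖ ≤ ‖b - Q n b‖ + ‖Q n b - An n xn‖ := by
          have : b - An n xn = (b - Q n b) + (Q n b - An n xn) := by abel
          rw [this]; exact norm_add_le _ _
      _ ≤ ‖b - Q n b‖ + (‖b - A z‖ + ‖A‖ * ‖z - P n z‖) := by
          exact add_le_add le_rfl (hstep.trans hstep2)
      _ < ε/3 + (ε/3 + ε/3) := by
          apply add_lt_add h1 (add_lt_add hdistz h2)
      _ = ε := by ring
  -- the uniform bound on the inner products
  set T : Lp ℝ 2 μ2 →L[ℝ] Lp ℝ 2 μ2 := ContinuousLinearMap.adjoint A with hT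
  have claim : ∀ ψ : Lp ℝ 2 μ2, |@inner ℝ _ _ b ψ| ≤ C' * ‖T ψ‖ := by
    intro ψ
    refine le_of_forall_pos_le_add fun ε hε => ?_
    have hden : (0:ℝ) < ‖ψ‖ + C' + 1 := by linarith [norm_nonneg ψ]
    set ε' : ℝ := ε / (‖ψ‖ + C' + 1) with hε'def
    have hε'pos : 0 < ε' := div_pos hε hden
    have E1 := key2 ε' hε'pos
    have E2 : ∀ᶠ n in atTop, ‖T (Q n ψ) - T ψ‖ < ε' := by
      have h : Tendsto (fun n => T (Q n ψ)) atTop (nhds (T ψ)) :=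
        (T.continuous.tendsto ψ).comp (hQconv ψ)
      exact (tendsto_iff_norm_sub_tendsto_zero.1 h).eventually_lt_const hε'pos
    obtain ⟨n, hn1, hn2, hn3⟩ := (hC'.and_eventually (E1.and E2)).exists
    set xn := B n (Q n b) with hxn
    have hsplit : @inner ℝ _ _ b ψ
        = @inner ℝ _ _ (b - An n xn) ψ + @inner ℝ _ _ (An n xn) ψ := by
      rw [← inner_add_left, sub_add_cancel]
    have hterm1 : |@inner ℝ _ _ (b - An n xn) ψ| ≤ ε' * ‖ψ‖ := by
      refine (abs_real_inner_le_norm _ _).trans ?_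
      exact mul_le_mul hn2.le le_rfl (norm_nonneg _) hε'pos.le
    have hswap : @inner ℝ _ _ (An n xn) ψ = @inner ℝ _ _ (P n xn) (T (Q n ψ)) := by
      have e2 : An n xn = Q n (A (P n xn)) := by rw [hAn n]; simp [ContinuousLinearMap.comp_apply]
      rw [e2]
      calc @inner ℝ _ _ (Q n (A (P n xn))) ψ
          = @inner ℝ _ _ (ContinuousLinearMap.adjoint (Q n) (A (P n xn))) ψ := by
            rw [(hQ n).2.1]
        _ = @inner ℝ _ _ (A (P n xn)) (Q n ψ) :=
            ContinuousLinearMap.adjoint_inner_left (Q n) ψ (A (P n xn))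
        _ = @inner ℝ _ _ (P n xn) (T (Q n ψ)) :=
            (ContinuousLinearMap.adjoint_inner_right A (P n xn) (Q n ψ)).symm
    have hterm2 : |@inner ℝ _ _ (An n xn) ψ| ≤ C' * (‖T ψ‖ + ε') := by
      rw [hswap]
      refine (abs_real_inner_le_norm _ _).trans ?_
      have hPx : ‖P n xn‖ ≤ C' := (orthProjNormLe (hP n).1 (hP n).2.1 xn).trans hn1
      have hTQ : ‖T (Q n ψ)‖ ≤ ‖T ψ‖ + ε' := by
        have := norm_sub_norm_le (T (Q n ψ)) (T ψ)
        linarith [hn3.le]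
      exact mul_le_mul hPx hTQ (norm_nonneg _) hC'0
    have hfinal : ε' * (‖ψ‖ + C') ≤ ε := by
      have h2 : ε' * (‖ψ‖ + C' + 1) = ε := by
        rw [hε'def]; field_simp
      nlinarith [hε'pos.le]
    calc |@inner ℝ _ _ b ψ|
        ≤ |@inner ℝ _ _ (b - An n xn) ψ| + |@inner ℝ _ _ (An n xn) ψ| := by
          rw [hsplit]; exact abs_add_le _ _
      _ ≤ ε' * ‖ψ‖ + C' * (‖T ψ‖ + ε') := add_le_add hterm1 hterm2
      _ = C' * ‖T ψ‖ + ε' * (‖ψ‖ + C') := by ring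
      _ ≤ C' * ‖T ψ‖ + ε := by linarith
  obtain ⟨w, hw⟩ := memRangeOfInnerLe A b C' hC'0 claim
  apply hb
  refine ⟨fun x => ∫ t in Set.Ioc 0 x, (w : ℝ → ℝ) t ∂μ2, ?_, ?_, ⟨w, fun x _ => rfl⟩⟩
  · rw [← hw]
    exact hA w
  · simp [Set.Ioc_self]
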